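/- arXiv:2005.12537 — 4 statements merged into one kernel-verified Lean document; each statement's English description precedes it below -/
import Mathlib

section
/- For any probability measure μ on pure states of an N-dimensional Hilbert space, the t-th frame potential F^(t)(μ) = ∫∫ |⟨ψ|φ⟩|^{2t} dμ(ψ) dμ(φ) satisfies F^(t)(μ) - F^(t)_Haar = ‖∫(|ψ⟩⟨ψ|)^{⊗t} dμ(ψ) - ∫_Haar(|ψ⟩⟨ψ|)^{⊗t} dψ‖²_HS ≥ 0, where ‖·‖_HS is the Hilbert–Schmidt norm. Hence F^(t)(μ) ≥ F^(t)_Haar, with equality iff the t-th moment operator of μ equals the Haar t-th moment operator (i.e., μ is a state t-design). -/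
/-!
Expanding `|⟨ψ|φ⟩|^(2t) = ⟨ψ^⊗t|φ^⊗t⟩⟨φ^⊗t|ψ^⊗t⟩` entrywise turns the cross frame potential
`∫∫ |⟨ψ|φ⟩|^(2t) dμ(ψ) dν(φ)` into the Hilbert–Schmidt inner product `⟨M_μ, M_ν⟩` of the moment
matrices. If `ν` is unitarily invariant, the average `∫ |⟨ψ|φ⟩|^(2t) dν(φ)` is the same for every
unit vector `ψ`, since the unitary group acts transitively on the unit sphere; so
`⟨M_μ, M_ν⟩ = ⟨M_ν, M_ν⟩` and `‖M_μ - M_ν‖² = ⟨M_μ, M_μ⟩ - 2 Re ⟨M_μ, M_ν⟩ + ⟨M_ν, M_ν⟩`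
is `F(μ) - F(ν)`.
-/

open MeasureTheory Matrix ComplexConjugate

lemma MeasureTheory.integral_sum_sum {α κ κ' : Type*} [MeasurableSpace α] [Fintype κ]
    [Fintype κ'] {μ : Measure α} {f : κ → κ' → α → ℂ} (hf : ∀ x y, Integrable (f x y) μ) :
    ∫ a, ∑ x, ∑ y, f x y a ∂μ = ∑ x, ∑ y, ∫ a, f x y a ∂μ := by
  rw [integral_finsetSum _ fun x _ => integrable_finsetSum _ fun y _ => hf x y]
  exact Finset.sum_congr rfl fun x _ => integral_finsetSum _ fun y _ => hf x y

lemma MeasureTheory.integral_eq_of_forall_eq {α E : Type*} [MeasurableSpace α]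
    [NormedAddCommGroup E] [NormedSpace ℝ E] [CompleteSpace E] {f : α → E} {s : Set α}
    (hf : ∀ x ∈ s, ∀ y ∈ s, f x = f y) {μ ν : Measure α} [IsProbabilityMeasure μ]
    [IsProbabilityMeasure ν] (hμ : ∀ᵐ x ∂μ, x ∈ s) (hν : ∀ᵐ x ∂ν, x ∈ s) :
    ∫ x, f x ∂μ = ∫ x, f x ∂ν := by
  have hconst : ∀ᵐ x ∂μ, f x = ∫ y, f y ∂ν := by
    filter_upwards [hμ] with x hx
    rw [integral_congr_ae (hν.mono fun y hy => hf y hy x hx), integral_const, probReal_univ,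
      one_smul]
  rw [integral_congr_ae hconst, integral_const, probReal_univ, one_smul]

lemma Matrix.sum_sum_norm_sub_sq {m n : Type*} [Fintype m] [Fintype n] (A B : Matrix m n ℂ) :
    ∑ x, ∑ y, ‖A x y - B x y‖ ^ 2 = ∑ x, ∑ y, (conj (A x y) * A x y).re +
      ∑ x, ∑ y, (conj (B x y) * B x y).re - 2 * ∑ x, ∑ y, (conj (A x y) * B x y).re := by
  simp only [Finset.mul_sum, ← Finset.sum_add_distrib, ← Finset.sum_sub_distrib]
  refine Finset.sum_congr rfl fun x _ => Finset.sum_congr rfl fun y _ => ?_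
  simp [Complex.sq_norm, Complex.normSq_apply]
  ring

lemma Matrix.sum_sum_norm_sub_sq_eq_zero_iff {m n : Type*} [Fintype m] [Fintype n]
    (A B : Matrix m n ℂ) : ∑ x, ∑ y, ‖A x y - B x y‖ ^ 2 = 0 ↔ A = B := by
  rw [← Fintype.sum_prod_type', Fintype.sum_eq_zero_iff_of_nonneg fun _ => by positivity,
    ← Matrix.ext_iff]
  simp [funext_iff, sub_eq_zero]

namespace FramePotential

variable {ι : Type*}

/-- The entries of `(|ψ⟩⟨ψ|)^⊗t`, indexed by multi-indices `x y : Fin t → ι`. -/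
def tensorPowerProj (t : ℕ) (ψ : ι → ℂ) : Matrix (Fin t → ι) (Fin t → ι) ℂ :=
  fun x y => ∏ i, ψ (x i) * conj (ψ (y i))

lemma norm_tensorPowerProj_le_one {t : ℕ} {ψ : ι → ℂ} (h : ∀ i, ‖ψ i‖ ≤ 1)
    (x y : Fin t → ι) : ‖tensorPowerProj t ψ x y‖ ≤ 1 := by
  rw [tensorPowerProj, norm_prod]
  refine Finset.prod_le_one (fun _ _ => norm_nonneg _) fun i _ => ?_
  rw [norm_mul, Complex.norm_conj]
  exact mul_le_one₀ (h _) (norm_nonneg _) (h _)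

lemma continuous_tensorPowerProj (t : ℕ) (x y : Fin t → ι) :
    Continuous fun ψ : ι → ℂ => tensorPowerProj t ψ x y := by
  unfold tensorPowerProj
  fun_prop

variable [Fintype ι]

noncomputable def momentMatrix (t : ℕ) (ρ : Measure (ι → ℂ)) :
    Matrix (Fin t → ι) (Fin t → ι) ℂ :=
  fun x y => ∫ ψ, tensorPowerProj t ψ x y ∂ρ

noncomputable def crossFramePotential (t : ℕ) (μ ν : Measure (ι → ℂ)) : ℝ :=
  ∫ ψ, ∫ φ, ‖∑ i, conj (ψ i) * φ i‖ ^ (2 * t) ∂ν ∂μ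

lemma ofReal_norm_inner_pow_eq_sum (t : ℕ) (ψ φ : ι → ℂ) :
    ((‖∑ i, conj (ψ i) * φ i‖ ^ (2 * t) : ℝ) : ℂ) =
      ∑ x, ∑ y, conj (tensorPowerProj t ψ x y) * tensorPowerProj t φ x y := by
  set z := ∑ i, conj (ψ i) * φ i
  have hz : conj z = ∑ i, conj (φ i) * ψ i := by simp [z, map_sum, mul_comm]
  calc ((‖z‖ ^ (2 * t) : ℝ) : ℂ) = z ^ t * conj z ^ t := by
        rw [← mul_pow, Complex.mul_conj', pow_mul]
        push_cast
        ring
    _ = _ := by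
        rw [hz, Finset.sum_pow', Finset.sum_pow', Fintype.piFinset_univ, Finset.sum_mul_sum]
        refine Finset.sum_congr rfl fun x _ => Finset.sum_congr rfl fun y _ => ?_
        simp only [tensorPowerProj, map_prod, map_mul, Complex.conj_conj,
          ← Finset.prod_mul_distrib]
        exact Finset.prod_congr rfl fun i _ => by ring

lemma norm_le_one_of_sum_sq_eq_one {ψ : ι → ℂ} (h : ∑ i, ‖ψ i‖ ^ 2 = 1) (i : ι) :
    ‖ψ i‖ ≤ 1 := by
  refine (pow_le_one_iff_of_nonneg (norm_nonneg _) two_ne_zero).mp ?_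
  exact h ▸ Finset.single_le_sum (f := fun i => ‖ψ i‖ ^ 2) (fun _ _ => by positivity)
    (Finset.mem_univ i)

lemma integrable_tensorPowerProj {t : ℕ} {ρ : Measure (ι → ℂ)} [IsFiniteMeasure ρ]
    (hρ : ∀ᵐ ψ ∂ρ, ∑ i, ‖ψ i‖ ^ 2 = 1) (x y : Fin t → ι) :
    Integrable (fun ψ => tensorPowerProj t ψ x y) ρ := by
  refine Integrable.mono' (integrable_const 1)
    (continuous_tensorPowerProj t x y).aestronglyMeasurable ?_
  filter_upwards [hρ] with ψ h
  exact norm_tensorPowerProj_le_one (norm_le_one_of_sum_sq_eq_one h) x y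

lemma ofReal_crossFramePotential_eq_sum {t : ℕ} {μ ν : Measure (ι → ℂ)} [IsFiniteMeasure μ]
    [IsFiniteMeasure ν] (hμ : ∀ᵐ ψ ∂μ, ∑ i, ‖ψ i‖ ^ 2 = 1)
    (hν : ∀ᵐ ψ ∂ν, ∑ i, ‖ψ i‖ ^ 2 = 1) :
    (crossFramePotential t μ ν : ℂ) =
      ∑ x, ∑ y, conj (momentMatrix t μ x y) * momentMatrix t ν x y := by
  have inner_integral (ψ : ι → ℂ) :
      ((∫ φ, ‖∑ i, conj (ψ i) * φ i‖ ^ (2 * t) ∂ν : ℝ) : ℂ) =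
        ∑ x, ∑ y, conj (tensorPowerProj t ψ x y) * momentMatrix t ν x y := calc
    _ = ∫ φ, ((‖∑ i, conj (ψ i) * φ i‖ ^ (2 * t) : ℝ) : ℂ) ∂ν := integral_ofReal.symm
    _ = ∫ φ, ∑ x, ∑ y, conj (tensorPowerProj t ψ x y) * tensorPowerProj t φ x y ∂ν := by
      simp_rw [ofReal_norm_inner_pow_eq_sum]
    _ = _ := by
      rw [integral_sum_sum fun x y => (integrable_tensorPowerProj hν x y).const_mul _]
      simp_rw [integral_const_mul, momentMatrix]
  have integrable_conj (x y : Fin t → ι) :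
      Integrable (fun ψ => conj (tensorPowerProj t ψ x y)) μ :=
    Complex.conjCLE.toContinuousLinearMap.integrable_comp (integrable_tensorPowerProj hμ x y)
  calc (crossFramePotential t μ ν : ℂ)
      = ∫ ψ, ((∫ φ, ‖∑ i, conj (ψ i) * φ i‖ ^ (2 * t) ∂ν : ℝ) : ℂ) ∂μ := integral_ofReal.symm
    _ = ∫ ψ, ∑ x, ∑ y, conj (tensorPowerProj t ψ x y) * momentMatrix t ν x y ∂μ := by
      simp_rw [inner_integral]
    _ = _ := by
      rw [integral_sum_sum fun x y => (integrable_conj x y).mul_const (momentMatrix t ν x y)]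
      simp_rw [integral_mul_const, integral_conj, momentMatrix]

lemma crossFramePotential_eq_sum_re {t : ℕ} {μ ν : Measure (ι → ℂ)} [IsFiniteMeasure μ]
    [IsFiniteMeasure ν] (hμ : ∀ᵐ ψ ∂μ, ∑ i, ‖ψ i‖ ^ 2 = 1)
    (hν : ∀ᵐ ψ ∂ν, ∑ i, ‖ψ i‖ ^ 2 = 1) :
    crossFramePotential t μ ν =
      ∑ x, ∑ y, (conj (momentMatrix t μ x y) * momentMatrix t ν x y).re := by
  have h := congrArg Complex.re (ofReal_crossFramePotential_eq_sum (t := t) hμ hν)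
  simpa only [Complex.ofReal_re, Complex.re_sum] using h

variable [DecidableEq ι]

lemma inner_unitary_mulVec (U : unitaryGroup ι ℂ) (ψ φ : ι → ℂ) :
    ∑ i, conj (((U : Matrix ι ι ℂ) *ᵥ ψ) i) * ((U : Matrix ι ι ℂ) *ᵥ φ) i =
      ∑ i, conj (ψ i) * φ i := by
  change star ((U : Matrix ι ι ℂ) *ᵥ ψ) ⬝ᵥ ((U : Matrix ι ι ℂ) *ᵥ φ) = star ψ ⬝ᵥ φ
  rw [star_mulVec, dotProduct_mulVec, vecMul_vecMul, ← star_eq_conjTranspose,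
    UnitaryGroup.star_mul_self, vecMul_one]

lemma exists_unitary_mulVec_single_eq {ψ : ι → ℂ} (hψ : ∑ i, ‖ψ i‖ ^ 2 = 1) (i : ι) :
    ∃ U : unitaryGroup ι ℂ, (U : Matrix ι ι ℂ) *ᵥ Pi.single i 1 = ψ := by
  have hunit : Orthonormal ℂ (({i} : Set ι).domRestrict fun _ => WithLp.toLp 2 ψ) := by
    rw [orthonormal_subsingleton_iff]
    intro _
    simp [EuclideanSpace.norm_eq, hψ]
  obtain ⟨b, hb⟩ := hunit.exists_orthonormalBasis_extension_of_card_eq (by simp)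
  refine ⟨⟨_, (EuclideanSpace.basisFun ι ℂ).toMatrix_orthonormalBasis_mem_unitary b⟩, ?_⟩
  ext j
  simp [mulVec_single, Module.Basis.toMatrix_apply, hb i rfl]

lemma integral_norm_inner_unitary_mulVec_pow {ν : Measure (ι → ℂ)}
    (hν : ∀ U : unitaryGroup ι ℂ, ν.map ((U : Matrix ι ι ℂ) *ᵥ ·) = ν)
    (U : unitaryGroup ι ℂ) (ψ : ι → ℂ) (n : ℕ) :
    ∫ φ, ‖∑ i, conj (((U : Matrix ι ι ℂ) *ᵥ ψ) i) * φ i‖ ^ n ∂ν =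
      ∫ φ, ‖∑ i, conj (ψ i) * φ i‖ ^ n ∂ν := by
  conv_lhs => rw [← hν U]
  rw [integral_map (Continuous.aemeasurable (by fun_prop))
    (Continuous.aestronglyMeasurable (by fun_prop))]
  simp_rw [inner_unitary_mulVec]

lemma integral_norm_inner_pow_eq_of_sum_sq_eq_one {ν : Measure (ι → ℂ)}
    (hν : ∀ U : unitaryGroup ι ℂ, ν.map ((U : Matrix ι ι ℂ) *ᵥ ·) = ν) (n : ℕ)
    {ψ ψ' : ι → ℂ} (hψ : ∑ i, ‖ψ i‖ ^ 2 = 1) (hψ' : ∑ i, ‖ψ' i‖ ^ 2 = 1) :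
    ∫ φ, ‖∑ i, conj (ψ i) * φ i‖ ^ n ∂ν = ∫ φ, ‖∑ i, conj (ψ' i) * φ i‖ ^ n ∂ν := by
  have : Nonempty ι := by
    by_contra h
    simp [not_nonempty_iff.mp h] at hψ
  let i := Classical.arbitrary ι
  obtain ⟨U, rfl⟩ := exists_unitary_mulVec_single_eq hψ i
  obtain ⟨U', rfl⟩ := exists_unitary_mulVec_single_eq hψ' i
  rw [integral_norm_inner_unitary_mulVec_pow hν, integral_norm_inner_unitary_mulVec_pow hν]

lemma crossFramePotential_eq_of_unitarily_invariant {t : ℕ} {μ μ' ν : Measure (ι → ℂ)}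
    [IsProbabilityMeasure μ] [IsProbabilityMeasure μ']
    (hμ : ∀ᵐ ψ ∂μ, ∑ i, ‖ψ i‖ ^ 2 = 1) (hμ' : ∀ᵐ ψ ∂μ', ∑ i, ‖ψ i‖ ^ 2 = 1)
    (hν : ∀ U : unitaryGroup ι ℂ, ν.map ((U : Matrix ι ι ℂ) *ᵥ ·) = ν) :
    crossFramePotential t μ ν = crossFramePotential t μ' ν := by
  have hconst : ∀ ψ ∈ {ψ : ι → ℂ | ∑ i, ‖ψ i‖ ^ 2 = 1}, ∀ ψ' ∈ {ψ : ι → ℂ | ∑ i, ‖ψ i‖ ^ 2 = 1},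
      ∫ φ, ‖∑ i, conj (ψ i) * φ i‖ ^ (2 * t) ∂ν = ∫ φ, ‖∑ i, conj (ψ' i) * φ i‖ ^ (2 * t) ∂ν :=
    fun _ hψ _ hψ' => integral_norm_inner_pow_eq_of_sum_sq_eq_one hν _ hψ hψ'
  exact integral_eq_of_forall_eq hconst hμ hμ'

theorem crossFramePotential_sub_eq_sum_norm_sq {t : ℕ} {μ ν : Measure (ι → ℂ)}
    [IsProbabilityMeasure μ] [IsProbabilityMeasure ν]
    (hμ : ∀ᵐ ψ ∂μ, ∑ i, ‖ψ i‖ ^ 2 = 1) (hν : ∀ᵐ ψ ∂ν, ∑ i, ‖ψ i‖ ^ 2 = 1)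
    (hν_inv : ∀ U : unitaryGroup ι ℂ, ν.map ((U : Matrix ι ι ℂ) *ᵥ ·) = ν) :
    crossFramePotential t μ μ - crossFramePotential t ν ν =
      ∑ x, ∑ y, ‖momentMatrix t μ x y - momentMatrix t ν x y‖ ^ 2 := by
  have hcross : crossFramePotential t μ ν = crossFramePotential t ν ν :=
    crossFramePotential_eq_of_unitarily_invariant hμ hν hν_inv
  rw [Matrix.sum_sum_norm_sub_sq, ← crossFramePotential_eq_sum_re hμ hμ,
    ← crossFramePotential_eq_sum_re hν hν, ← crossFramePotential_eq_sum_re hμ hν, hcross]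
  ring

end FramePotential

open FramePotential

theorem frame_potential_ge_haar_general (N t : ℕ)
    (μ ν : Measure (Fin N → ℂ))
    [IsProbabilityMeasure μ] [IsProbabilityMeasure ν]
    (hμs : ∀ᵐ ψ ∂μ, ∑ i, ‖ψ i‖ ^ 2 = 1) (hνs : ∀ᵐ ψ ∂ν, ∑ i, ‖ψ i‖ ^ 2 = 1)
    (hinv : ∀ U : Matrix.unitaryGroup (Fin N) ℂ,
      Measure.map (fun ψ => (U : Matrix (Fin N) (Fin N) ℂ).mulVec ψ) ν = ν) :
    let M : Measure (Fin N → ℂ) → Matrix (Fin t → Fin N) (Fin t → Fin N) ℂ :=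
      fun ρ => fun x y => ∫ ψ, (∏ i, ψ (x i) * starRingEnd ℂ (ψ (y i))) ∂ρ
    let Fp : Measure (Fin N → ℂ) → ℝ :=
      fun ρ => ∫ ψ, ∫ φ, ‖∑ i, starRingEnd ℂ (ψ i) * φ i‖ ^ (2 * t) ∂ρ ∂ρ
    (Fp μ - Fp ν = ∑ x, ∑ y, ‖M μ x y - M ν x y‖ ^ 2) ∧
    Fp ν ≤ Fp μ ∧
    (Fp μ = Fp ν ↔ M μ = M ν) := by
  intro M Fp
  have hdist : Fp μ - Fp ν = ∑ x, ∑ y, ‖M μ x y - M ν x y‖ ^ 2 :=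
    crossFramePotential_sub_eq_sum_norm_sq hμs hνs hinv
  refine ⟨hdist, sub_nonneg.mp (hdist ▸ by positivity), ?_⟩
  rw [← sub_eq_zero, hdist, Matrix.sum_sum_norm_sub_sq_eq_zero_iff]

/-- For any probability measure `μ` on pure states of an `N`-dimensional Hilbert space
(modelled as a measure on `ℂ^N` supported on the unit sphere), and for the Haar measure
`ν` (an arbitrary unitarily invariant probability measure supported on the unit sphere),
the `t`-th frame potential `F⁽ᵗ⁾(ρ) = ∫∫ |⟨ψ|φ⟩|^(2t) dρdρ` satisfies
`F⁽ᵗ⁾(μ) - F⁽ᵗ⁾(Haar) = ‖M_μ - M_Haar‖²_HS ≥ 0`, where `M_ρ = ∫ (|ψ⟩⟨ψ|)^{⊗t} dρ`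
is the `t`-th moment operator.  Hence `F⁽ᵗ⁾(μ) ≥ F⁽ᵗ⁾(Haar)`, with equality iff
`M_μ = M_Haar`, i.e. iff `μ` is a state `t`-design. -/
theorem frame_potential_ge_haar (N t : ℕ) (hN : 1 ≤ N) (ht : 1 ≤ t)
    (μ ν : Measure (Fin N → ℂ))
    [IsProbabilityMeasure μ] [IsProbabilityMeasure ν]
    (hμs : ∀ᵐ ψ ∂μ, ∑ i, ‖ψ i‖ ^ 2 = 1) (hνs : ∀ᵐ ψ ∂ν, ∑ i, ‖ψ i‖ ^ 2 = 1)
    (hinv : ∀ U : Matrix.unitaryGroup (Fin N) ℂ,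
      Measure.map (fun ψ => (U : Matrix (Fin N) (Fin N) ℂ).mulVec ψ) ν = ν) :
    let M : Measure (Fin N → ℂ) → Matrix (Fin t → Fin N) (Fin t → Fin N) ℂ :=
      fun ρ => fun x y => ∫ ψ, (∏ i, ψ (x i) * starRingEnd ℂ (ψ (y i))) ∂ρ
    let Fp : Measure (Fin N → ℂ) → ℝ :=
      fun ρ => ∫ ψ, ∫ φ, ‖∑ i, starRingEnd ℂ (ψ i) * φ i‖ ^ (2 * t) ∂ρ ∂ρ
    (Fp μ - Fp ν = ∑ x, ∑ y, ‖M μ x y - M ν x y‖ ^ 2) ∧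
    Fp ν ≤ Fp μ ∧
    (Fp μ = Fp ν ↔ M μ = M ν) :=
  frame_potential_ge_haar_general N t μ ν hμs hνs hinv
end

section
/- For the tensor product ansatz with m-qubit blocks (each block a unitary 2-design) on n qubits, the ratio of its second frame potential to the Haar value is 2^{n/m - 1}(2^n+1)/(2^m+1)^{n/m}, which for fixed m > 0 grows without bound as n/m → ∞; in particular it is at least 2^{n/m - 1} · (2^n+1)/2^{n + n/m} and tends to 2^{n/m - 1} asymptotically. -/
/-!
Write `x = 2^m`, so that the ratio for `b` blocks is `2^(b-1) (x^b + 1) / (x + 1)^b`.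
Since `x + 1 ≤ 2x`, it is at least `2^(b-1) x^b / (2x)^b`, which is the lower bound. Dropping
the `+ 1` in the numerator instead leaves `(2x / (x + 1))^b / 2`, a geometric sequence with
ratio `2x / (x + 1) > 1` once `x ≥ 2`, hence the unbounded growth in `b`. For fixed `b`,
`(x^b + 1) / (x + 1)^b → 1` as `x → ∞`.
-/

open Filter Topology

/-- The paper's `r(n, m)` for `n = m * b`. -/
noncomputable def frameRatio (m b : ℕ) : ℝ := 2 ^ (b - 1) * (2 ^ (m * b) + 1) / (2 ^ m + 1) ^ b

theorem tendsto_pow_add_one_div_add_one_pow {b : ℕ} (hb : b ≠ 0) :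
    Tendsto (fun x : ℝ => (x ^ b + 1) / (x + 1) ^ b) atTop (𝓝 1) := by
  have hcont : Tendsto (fun y : ℝ => (1 + y ^ b) / (1 + y) ^ b) (𝓝 0) (𝓝 1) := by
    have h : ContinuousAt (fun y : ℝ => (1 + y ^ b) / (1 + y) ^ b) 0 := by
      fun_prop (disch := norm_num)
    simpa [zero_pow hb] using h.tendsto
  refine (hcont.comp tendsto_inv_atTop_zero).congr' ?_
  filter_upwards [eventually_gt_atTop 0] with x hx
  have hx' : 1 + x⁻¹ = (x + 1) / x := by field_simp
  simp only [Function.comp, hx', div_pow, inv_pow]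
  field_simp

theorem add_one_pow_le_two_pow (m b : ℕ) : ((2 : ℝ) ^ m + 1) ^ b ≤ 2 ^ (m * b + b) := by
  calc ((2 : ℝ) ^ m + 1) ^ b ≤ (2 ^ (m + 1)) ^ b := by
        gcongr
        rw [pow_succ]
        linarith [one_le_pow₀ (M₀ := ℝ) (n := m) one_le_two]
    _ = 2 ^ (m * b + b) := by rw [← pow_mul, add_mul, one_mul]

theorem half_pow_le_frameRatio (m b : ℕ) :
    ((2 : ℝ) ^ (m + 1) / (2 ^ m + 1)) ^ b / 2 ≤ frameRatio m b := by
  rcases b with _ | b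
  · norm_num [frameRatio]
  · rw [frameRatio, div_pow, ← pow_mul, Nat.add_sub_cancel]
    have : (m + 1) * (b + 1) = m * (b + 1) + b + 1 := by ring
    rw [this, pow_succ, div_right_comm, mul_div_cancel_right₀ _ two_ne_zero, pow_add, mul_comm]
    gcongr
    linarith

theorem tendsto_frameRatio_atTop {m : ℕ} (hm : 1 ≤ m) : Tendsto (frameRatio m) atTop atTop := by
  have hc : 1 < (2 : ℝ) ^ (m + 1) / (2 ^ m + 1) := by
    rw [one_lt_div (by positivity), pow_succ]
    linarith [one_lt_pow₀ (M₀ := ℝ) one_lt_two (by omega : m ≠ 0)]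
  exact tendsto_atTop_mono (half_pow_le_frameRatio m)
    ((tendsto_pow_atTop_atTop_of_one_lt hc).atTop_div_const two_pos)

theorem tendsto_frameRatio_div_two_pow {b : ℕ} (hb : b ≠ 0) :
    Tendsto (fun m => frameRatio m b / 2 ^ (b - 1)) atTop (𝓝 1) := by
  refine ((tendsto_pow_add_one_div_add_one_pow hb).comp
    (tendsto_pow_atTop_atTop_of_one_lt one_lt_two)).congr fun m => ?_
  simp only [Function.comp, frameRatio, pow_mul]
  field_simp

/-- Frame-potential ratio of the tensor product ansatz: with `b = n/m` blocks of `m`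
qubits, `r m b = 2^(b-1)(2^(mb)+1)/(2^m+1)^b` (the ratio of its second frame potential
to the Haar value).  For fixed `m ≥ 1` it grows without bound as `b = n/m → ∞`; it is
bounded below by `2^(b-1)·(2^n+1)/2^(n+n/m)` (with `n = m·b`), and for fixed `b` it
tends to `2^(b-1)` asymptotically (i.e. `r/2^(b-1) → 1` as `m → ∞`). -/
theorem tensor_product_ratio_unbounded :
    ∀ m : ℕ, 1 ≤ m →
      (Tendsto (fun b : ℕ => (2 : ℝ) ^ (b - 1) * ((2 : ℝ) ^ (m * b) + 1) / ((2 : ℝ) ^ m + 1) ^ b)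
        atTop atTop) ∧
      (∀ b : ℕ, 1 ≤ b →
        (2 : ℝ) ^ (b - 1) * ((2 : ℝ) ^ (m * b) + 1) / (2 : ℝ) ^ (m * b + b)
          ≤ (2 : ℝ) ^ (b - 1) * ((2 : ℝ) ^ (m * b) + 1) / ((2 : ℝ) ^ m + 1) ^ b) ∧
      (∀ b : ℕ, 1 ≤ b →
        Tendsto (fun m' : ℕ =>
            ((2 : ℝ) ^ (b - 1) * ((2 : ℝ) ^ (m' * b) + 1) / ((2 : ℝ) ^ m' + 1) ^ b)
              / (2 : ℝ) ^ (b - 1))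
          atTop (nhds 1)) :=
  fun m hm =>
    ⟨tendsto_frameRatio_atTop hm,
      fun b _ => div_le_div_of_nonneg_left (by positivity) (by positivity)
        (add_one_pow_le_two_pow m b),
      fun b hb => tendsto_frameRatio_div_two_pow (Nat.one_le_iff_ne_zero.mp hb)⟩
end

section
/- If m = 2a log₂ n (a > 0, n ≥ 2), then (1 + 83.2/2^{m/2})^{n/m - 1} < e^{41.6/(a n^{a-1} log₂ n)}; moreover if 41.6/(a n^{a-1} log₂ n) < 1, then e^{41.6/(a n^{a-1} log₂ n)} < 1 + (e-1)·41.6/(a n^{a-1} log₂ n). -/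
/-- If `m = 2a log₂ n` (with `a > 0`, `n ≥ 2`), then
`(1 + 83.2/2^(m/2))^(n/m - 1) < e^(41.6/(a n^(a-1) log₂ n))`; moreover, if
`41.6/(a n^(a-1) log₂ n) < 1`, then
`e^(41.6/(a n^(a-1) log₂ n)) < 1 + (e-1)·41.6/(a n^(a-1) log₂ n)`. -/
theorem exp_bound_log_blocks (a : ℝ) (ha : 0 < a) (n : ℕ) (hn : 2 ≤ n)
    (m : ℝ) (hm : m = 2 * a * Real.logb 2 n) :
    ((1 + 83.2 / (2 : ℝ) ^ (m / 2)) ^ ((n : ℝ) / m - 1)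
      < Real.exp (41.6 / (a * (n : ℝ) ^ (a - 1) * Real.logb 2 n))) ∧
    (41.6 / (a * (n : ℝ) ^ (a - 1) * Real.logb 2 n) < 1 →
      Real.exp (41.6 / (a * (n : ℝ) ^ (a - 1) * Real.logb 2 n))
        < 1 + (Real.exp 1 - 1) * (41.6 / (a * (n : ℝ) ^ (a - 1) * Real.logb 2 n))) := by
  have hn1 : (1:ℝ) < (n:ℝ) := by exact_mod_cast hn
  have hnpos : (0:ℝ) < (n:ℝ) := by linarith
  have hL : 0 < Real.logb 2 n := Real.logb_pos one_lt_two hn1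
  have hna : (0:ℝ) < (n:ℝ) ^ a := Real.rpow_pos_of_pos hnpos a
  have hm0 : 0 < m := by rw [hm]; positivity
  have h2 : (2:ℝ) ^ (m/2) = (n:ℝ) ^ a := by
    rw [hm]
    have h : 2 * a * Real.logb 2 n / 2 = Real.logb 2 n * a := by ring
    rw [h, Real.rpow_mul (by norm_num), Real.rpow_logb (by norm_num) (by norm_num) hnpos]
  set y := 41.6 / (a * (n:ℝ) ^ (a-1) * Real.logb 2 n) with hy
  have hna1 : (0:ℝ) < (n:ℝ) ^ (a-1) := Real.rpow_pos_of_pos hnpos _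
  have hy0 : 0 < y := by rw [hy]; positivity
  set x := 83.2 / (n:ℝ) ^ a with hxdef
  have hx0 : 0 < x := by rw [hxdef]; positivity
  have hyx : (n:ℝ) / m * x = y := by
    have hsub : (n:ℝ) ^ (a-1) = (n:ℝ) ^ a / (n:ℝ) := by
      rw [Real.rpow_sub hnpos, Real.rpow_one]
    rw [hy, hxdef, hm, hsub]
    field_simp
    ring
  have h1lt : 1 < Real.exp y := by
    have := Real.add_one_lt_exp (ne_of_gt hy0)
    linarith
  constructor
  · rw [h2]
    rcases le_or_gt ((n:ℝ) / m - 1) 0 with ht | ht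
    · calc (1 + x) ^ ((n:ℝ)/m - 1) ≤ 1 :=
            Real.rpow_le_one_of_one_le_of_nonpos (by linarith) ht
        _ < Real.exp y := h1lt
    · have hlog : Real.log (1 + x) < x := by
        have := Real.log_lt_sub_one_of_pos (show (0:ℝ) < 1 + x by linarith)
          (by linarith : (1:ℝ) + x ≠ 1)
        linarith
      have h3 : (1 + x) ^ ((n:ℝ)/m - 1)
          = Real.exp (Real.log (1 + x) * ((n:ℝ)/m - 1)) := by
        rw [Real.rpow_def_of_pos (by linarith)]
      rw [h3, Real.exp_lt_exp]
      have h4 : Real.log (1 + x) * ((n:ℝ)/m - 1) < x * ((n:ℝ)/m - 1) := by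
        exact mul_lt_mul_of_pos_right hlog ht
      have h5 : x * ((n:ℝ)/m - 1) < x * ((n:ℝ)/m) :=
        mul_lt_mul_of_pos_left (by linarith) hx0
      calc Real.log (1 + x) * ((n:ℝ)/m - 1) < x * ((n:ℝ)/m) := by linarith
        _ = y := by rw [← hyx]; ring
  · intro hy1
    have hc := strictConvexOn_exp.2 (Set.mem_univ (0:ℝ)) (Set.mem_univ (1:ℝ))
      (by norm_num) (show 0 < 1 - y by linarith) hy0 (by ring)
    simp only [smul_eq_mul, mul_zero, mul_one, zero_add, Real.exp_zero] at hc
    linarith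
end

section
/- Combining the bounds: if m = 2a log₂ n and 2288/(a n^{a-1} log₂ n) < 1, then F^(2)(ALT with ℓ=3) < (1 + 1/2^n)(1 + 1.2/n^{2a})²(1 + 2288/(a n^{a-1} log₂ n)) · F^(2)_Haar, where F^(2)_Haar = 1/(2^{n-1}(2^n+1)). In particular, for fixed a > 1, F^(2)(ALT)/F^(2)_Haar → 1 as n → ∞. -/
/-! With `m = 2a log₂ n` one has `2^m = n^(2a)` and `2^(m/2) = n^a`, so only the last factor of
Theorem 4 needs work.  Writing `D = a n^(a-1) log₂ n`, the exponent `n/m - 1` is at most `n/m` and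
`(83.2/n^a)·(n/m) = 41.6/D`, hence `(1 + 83.2/n^a)^(n/m-1) ≤ exp(41.6/D)`; as soon as `D > 2288`,
`32(exp(41.6/D) - 1) ≤ 32·41.6/(D - 41.6) ≤ 2288/D`.  Since `D → ∞`, the resulting envelope tends
to `1` and squeezes the ratio `F⁽²⁾(ALT)/F⁽²⁾_Haar`, which is at least `1`. -/

open Filter Real

lemma rpow_mul_logb {b : ℝ} (b_pos : 0 < b) (b_ne_one : b ≠ 1) (c : ℝ) {x : ℝ} (hx : 0 < x) :
    b ^ (c * logb b x) = x ^ c := by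
  rw [mul_comm, rpow_mul b_pos.le, rpow_logb b_pos b_ne_one hx]

lemma one_add_rpow_le_exp_mul {x t : ℝ} (hx : -1 < x) (ht : 0 ≤ t) :
    (1 + x) ^ t ≤ exp (x * t) := by
  rw [rpow_def_of_pos (by linarith)]
  gcongr
  linarith [log_le_sub_one_of_pos (show 0 < 1 + x by linarith)]

lemma exp_sub_one_le_div_one_sub {u : ℝ} (hu₀ : 0 ≤ u) (hu₁ : u < 1) :
    exp u - 1 ≤ u / (1 - u) := by
  have h := exp_bound_div_one_sub_of_interval hu₀ hu₁
  have : 1 / (1 - u) - 1 = u / (1 - u) := by rw [div_sub_one (by linarith)]; ring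
  linarith

lemma thirtytwo_mul_exp_sub_one_le {D : ℝ} (hD : 2288 < D) :
    32 * (exp (41.6 / D) - 1) ≤ 2288 / D := by
  have hD₀ : 0 < D := by linarith
  have hu₁ : 41.6 / D < 1 := by rw [div_lt_one hD₀]; linarith
  calc 32 * (exp (41.6 / D) - 1)
      ≤ 32 * ((41.6 / D) / (1 - 41.6 / D)) := by
        gcongr; exact exp_sub_one_le_div_one_sub (by positivity) hu₁
    _ = 1331.2 / (D - 41.6) := by field_simp; ring
    _ ≤ 2288 / D := by
        rw [div_le_div_iff₀ (by linarith) hD₀]; nlinarith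

lemma alt_block_factor_le_exp {a n : ℝ} (ha : 0 < a) (hn : 2 ≤ n) :
    (1 + 83.2 / n ^ a) ^ (n / (2 * a * logb 2 n) - 1)
      ≤ exp (41.6 / (a * n ^ (a - 1) * logb 2 n)) := by
  have hn₀ : 0 < n := by linarith
  have hL : 0 < logb 2 n := logb_pos (by norm_num) (by linarith)
  have hna : n ^ a = n ^ (a - 1) * n := by
    rw [← rpow_add_one hn₀.ne']; ring_nf
  have hx : 0 ≤ 83.2 / n ^ a := by positivity
  calc (1 + 83.2 / n ^ a) ^ (n / (2 * a * logb 2 n) - 1)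
      ≤ (1 + 83.2 / n ^ a) ^ (n / (2 * a * logb 2 n)) :=
        rpow_le_rpow_of_exponent_le (by linarith) (by linarith)
    _ ≤ exp (83.2 / n ^ a * (n / (2 * a * logb 2 n))) :=
        one_add_rpow_le_exp_mul (by linarith) (by positivity)
    _ = exp (41.6 / (a * n ^ (a - 1) * logb 2 n)) := by
        rw [hna]; congr 1; field_simp; ring

lemma alt_correction_le {a n : ℝ} (ha : 0 < a) (hn : 2 ≤ n)
    (hD : 2288 < a * n ^ (a - 1) * logb 2 n) :
    32 * ((1 + 83.2 / n ^ a) ^ (n / (2 * a * logb 2 n) - 1) - 1)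
      ≤ 2288 / (a * n ^ (a - 1) * logb 2 n) :=
  (thirtytwo_mul_exp_sub_one_le hD).trans' (by gcongr; exact alt_block_factor_le_exp ha hn)

lemma alt_theorem4_factor_le {a : ℝ} (ha : 0 < a) {n : ℕ} (hn : 2 ≤ n)
    (hsmall : 2288 / (a * (n : ℝ) ^ (a - 1) * logb 2 n) < 1) :
    (1 + 1 / (2 : ℝ) ^ n) * (1 + 1.2 / (2 : ℝ) ^ (2 * a * logb 2 n)) ^ 2
        * (1 + 32 * ((1 + 83.2 / (2 : ℝ) ^ (a * logb 2 n))
              ^ ((n : ℝ) / (2 * a * logb 2 n) - 1) - 1))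
      ≤ (1 + 1 / (2 : ℝ) ^ n) * (1 + 1.2 / (n : ℝ) ^ (2 * a)) ^ 2
        * (1 + 2288 / (a * (n : ℝ) ^ (a - 1) * logb 2 n)) := by
  have hn' : (2 : ℝ) ≤ n := by exact_mod_cast hn
  have hn₀ : (0 : ℝ) < n := by linarith
  have hD : 2288 < a * (n : ℝ) ^ (a - 1) * logb 2 n := by
    have : 0 < logb 2 (n : ℝ) := logb_pos (by norm_num) (by linarith)
    rwa [div_lt_one (by positivity)] at hsmall
  rw [rpow_mul_logb two_pos (by norm_num) _ hn₀, rpow_mul_logb two_pos (by norm_num) _ hn₀]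
  gcongr
  exact alt_correction_le ha hn' hD

lemma tendsto_const_div_mul_rpow_mul_logb {a : ℝ} (ha : 1 < a) (c : ℝ) :
    Tendsto (fun n : ℕ => c / (a * (n : ℝ) ^ (a - 1) * logb 2 n)) atTop (nhds 0) := by
  have hpow : Tendsto (fun x : ℝ => x ^ (a - 1)) atTop atTop := tendsto_rpow_atTop (by linarith)
  have hD := ((hpow.atTop_mul_atTop₀ (tendsto_logb_atTop (b := 2) (by norm_num))).const_mul_atTop
    (by linarith : 0 < a)).comp tendsto_natCast_atTop_atTop
  simpa only [Function.comp_def, mul_assoc] using tendsto_const_nhds.div_atTop hD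

lemma tendsto_alt_envelope {a : ℝ} (ha : 1 < a) :
    Tendsto (fun n : ℕ => (1 + 1 / (2 : ℝ) ^ n) * (1 + 1.2 / (n : ℝ) ^ (2 * a)) ^ 2
      * (1 + 2288 / (a * (n : ℝ) ^ (a - 1) * logb 2 n))) atTop (nhds 1) := by
  have h₁ : Tendsto (fun n : ℕ => 1 / (2 : ℝ) ^ n) atTop (nhds 0) := by
    simpa only [one_div, inv_pow] using
      tendsto_pow_atTop_nhds_zero_of_lt_one (by norm_num : (0 : ℝ) ≤ 2⁻¹) (by norm_num)
  have h₂ : Tendsto (fun n : ℕ => 1.2 / (n : ℝ) ^ (2 * a)) atTop (nhds 0) :=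
    tendsto_const_nhds.div_atTop
      ((tendsto_rpow_atTop (by linarith)).comp tendsto_natCast_atTop_atTop)
  have h₃ := tendsto_const_div_mul_rpow_mul_logb ha 2288
  simpa using ((h₁.const_add 1).mul ((h₂.const_add 1).pow 2)).mul (h₃.const_add 1)

/-- Combining the bounds for the 3-layer alternating layered ansatz: assume (Theorem 4
of the paper) that for all `n ≥ 2`, with `m = 2a log₂ n`,
`F⁽²⁾(ALT) < (1 + 1/2^n)(1 + 1.2/2^m)²(1 + 32((1 + 83.2/2^(m/2))^(n/m-1) - 1))·F⁽²⁾_Haar`,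
where `F⁽²⁾_Haar(n) = 1/(2^(n-1)(2^n+1))`, and `F⁽²⁾(ALT) ≥ F⁽²⁾_Haar`.  Then whenever
`2288/(a n^(a-1) log₂ n) < 1`,
`F⁽²⁾(ALT) < (1 + 1/2^n)(1 + 1.2/n^(2a))²(1 + 2288/(a n^(a-1) log₂ n))·F⁽²⁾_Haar`;
in particular, for fixed `a > 1`, `F⁽²⁾(ALT)/F⁽²⁾_Haar → 1` as `n → ∞`. -/
theorem alt_expressibility_asymptotic (a : ℝ) (ha : 1 < a)
    (F2 FHaar : ℕ → ℝ)
    (hFHaar : ∀ n : ℕ, FHaar n = 1 / ((2 : ℝ) ^ (n - 1) * ((2 : ℝ) ^ n + 1)))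
    (hup : ∀ n : ℕ, 2 ≤ n →
      F2 n < (1 + 1 / (2 : ℝ) ^ n)
          * (1 + 1.2 / (2 : ℝ) ^ (2 * a * Real.logb 2 n)) ^ 2
          * (1 + 32 * ((1 + 83.2 / (2 : ℝ) ^ (a * Real.logb 2 n))
                ^ ((n : ℝ) / (2 * a * Real.logb 2 n) - 1) - 1))
          * FHaar n)
    (hlow : ∀ n : ℕ, 2 ≤ n → FHaar n ≤ F2 n) :
    (∀ n : ℕ, 2 ≤ n → 2288 / (a * (n : ℝ) ^ (a - 1) * Real.logb 2 n) < 1 →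
      F2 n < (1 + 1 / (2 : ℝ) ^ n) * (1 + 1.2 / (n : ℝ) ^ (2 * a)) ^ 2
          * (1 + 2288 / (a * (n : ℝ) ^ (a - 1) * Real.logb 2 n)) * FHaar n) ∧
    Tendsto (fun n : ℕ => F2 n / FHaar n) atTop (nhds 1) := by
  have hHaar_pos : ∀ n, 0 < FHaar n := fun n => by rw [hFHaar n]; positivity
  have hbound : ∀ n : ℕ, 2 ≤ n → 2288 / (a * (n : ℝ) ^ (a - 1) * logb 2 n) < 1 → _ :=
    fun n hn hsmall => (hup n hn).trans_le <|
      mul_le_mul_of_nonneg_right (alt_theorem4_factor_le (by linarith) hn hsmall) (hHaar_pos n).le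
  refine ⟨hbound, tendsto_of_tendsto_of_tendsto_of_le_of_le' tendsto_const_nhds
    (tendsto_alt_envelope ha) ?_ ?_⟩
  · filter_upwards [eventually_ge_atTop 2] with n hn
    rw [le_div_iff₀ (hHaar_pos n), one_mul]
    exact hlow n hn
  · filter_upwards [eventually_ge_atTop 2,
      (tendsto_const_div_mul_rpow_mul_logb ha 2288).eventually_lt_const one_pos] with n hn hsmall
    rw [div_le_iff₀ (hHaar_pos n)]
    exact (hbound n hn hsmall).le
end
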